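/- arXiv:1601.04888 — 3 statements merged into one kernel-verified Lean document; each statement's English description precedes it below -/
import Mathlib

section
/- Let d ≥ 1, let r ∈ ℝ^d be a unit vector, let c ∈ ℝ be nonzero, and let K be an invertible d×d real matrix. Define R = I − 2 r rᵀ, R' = (I − (1/2)·r rᵀ)·R, R'' = R·(I + r rᵀ), and S = c·R·K·R'. Then S is invertible and S⁻¹ = c⁻¹·R''·K⁻¹·R. -/
open Matrix

/-- Inverse of the closed-form tensor vote (Corollary 1): with `R = I − 2 r rᵀ`,
`R' = (I − (1/2) r rᵀ)·R`, `R'' = R·(I + r rᵀ)`, `c ≠ 0` and `K` invertible,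
the matrix `S = c·R·K·R'` is invertible and `S⁻¹ = c⁻¹·R''·K⁻¹·R`. -/
theorem closed_form_inverse (d : ℕ) (hd : 1 ≤ d) (r : Fin d → ℝ)
    (hr : r ⬝ᵥ r = 1) (c : ℝ) (hc : c ≠ 0)
    (K : Matrix (Fin d) (Fin d) ℝ) (hK : IsUnit K)
    (R R' R'' S : Matrix (Fin d) (Fin d) ℝ)
    (hR : R = 1 - (2 : ℝ) • vecMulVec r r)
    (hR' : R' = (1 - (1 / 2 : ℝ) • vecMulVec r r) * R)
    (hR'' : R'' = R * (1 + vecMulVec r r))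
    (hS : S = c • (R * K * R')) :
    IsUnit S ∧ S⁻¹ = c⁻¹ • (R'' * K⁻¹ * R) := by
  set P := vecMulVec r r with hPdef
  have hP : P * P = P := by
    ext i j
    simp only [hPdef, Matrix.mul_apply, vecMulVec_apply]
    have h1 : ∑ k, r i * r k * (r k * r j) = (r i * r j) * ∑ k, r k * r k := by
      rw [Finset.mul_sum]
      exact Finset.sum_congr rfl fun k _ => by ring
    rw [h1, show (∑ k, r k * r k) = 1 from hr, mul_one]
  have hRR : R * R = 1 := by
    rw [hR]
    simp only [mul_sub, sub_mul, mul_one, one_mul, smul_mul_assoc, mul_smul_comm,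
      smul_smul, hP]
    module
  have h2 : (1 - (1 / 2 : ℝ) • P) * (1 + P) = 1 := by
    simp only [mul_add, sub_mul, mul_one, one_mul, smul_mul_assoc, hP]
    module
  have h3 : (1 + P) * (1 - (1 / 2 : ℝ) • P) = 1 := by
    simp only [mul_sub, add_mul, mul_one, one_mul, mul_smul_comm, hP]
    module
  have hKdet : IsUnit K.det := (Matrix.isUnit_iff_isUnit_det K).mp hK
  have hKK : K * K⁻¹ = 1 := Matrix.mul_nonsing_inv K hKdet
  have hKK' : K⁻¹ * K = 1 := Matrix.nonsing_inv_mul K hKdet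
  have hR'R'' : R' * R'' = 1 := by
    rw [hR', hR'', mul_assoc, ← mul_assoc R R, hRR, one_mul, h2]
  set T : Matrix (Fin d) (Fin d) ℝ := c⁻¹ • (R'' * K⁻¹ * R) with hT
  have hST : S * T = 1 := by
    rw [hS, hT, smul_mul_assoc, mul_smul_comm, smul_smul, mul_inv_cancel₀ hc, one_smul]
    calc R * K * R' * (R'' * K⁻¹ * R)
        = R * (K * ((R' * R'') * (K⁻¹ * R))) := by
          simp only [mul_assoc]
      _ = 1 := by rw [hR'R'', one_mul, ← mul_assoc K, hKK, one_mul, hRR]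
  have hTS : T * S = 1 := mul_eq_one_comm.mp hST
  refine ⟨⟨⟨S, T, hST, hTS⟩, rfl⟩, Matrix.inv_eq_right_inv hST⟩
end

section
/- In ℝ², let K be the symmetric positive-definite matrix with diagonal entries 1/2 and 1 and zero off-diagonal entries, let r = (√2/2, √2/2) (a unit vector), and define R = I − 2 r rᵀ, R' = (I − (1/2)·r rᵀ)·R, and S = R·K·R'. Then S is not symmetric: S ≠ Sᵀ (explicitly, the (1,2)-entry of S is −1/4 while the (2,1)-entry is −1/8). -/
open Matrix

/-- A concrete 2D instance showing the closed-form tensor vote need not be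
symmetric: with `K = diag(1/2, 1)`, `r = (√2/2, √2/2)`, `R = I − 2 r rᵀ`,
`R' = (I − (1/2) r rᵀ)·R` and `S = R·K·R'`, we have `S ≠ Sᵀ`; explicitly the
`(1,2)` entry of `S` is `−1/4` while the `(2,1)` entry is `−1/8`. -/
theorem cftv_asymmetric_example
    (K : Matrix (Fin 2) (Fin 2) ℝ)
    (hK : K = !![(1 / 2 : ℝ), 0; 0, 1])
    (r : Fin 2 → ℝ)
    (hr : r = ![Real.sqrt 2 / 2, Real.sqrt 2 / 2])
    (R R' S : Matrix (Fin 2) (Fin 2) ℝ)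
    (hR : R = 1 - (2 : ℝ) • vecMulVec r r)
    (hR' : R' = (1 - (1 / 2 : ℝ) • vecMulVec r r) * R)
    (hS : S = R * K * R') :
    S ≠ Sᵀ ∧ S 0 1 = -(1 / 4) ∧ S 1 0 = -(1 / 8) := by
  have hq : Real.sqrt 2 / 2 * (Real.sqrt 2 / 2) = 1/2 := by
    rw [div_mul_div_comm, Real.mul_self_sqrt (by norm_num : (0:ℝ) ≤ 2)]; norm_num
  subst hr hK hR hR' hS
  constructor
  · intro h
    have h' := congrFun (congrFun h 0) 1
    rw [Matrix.transpose_apply] at h'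
    simp [Matrix.mul_apply, Fin.sum_univ_two, vecMulVec, Matrix.one_apply, hq] at h'
  constructor
  · simp [Matrix.mul_apply, Fin.sum_univ_two, vecMulVec, Matrix.one_apply, hq]
    norm_num
  · simp [Matrix.mul_apply, Fin.sum_univ_two, vecMulVec, Matrix.one_apply, hq]
    norm_num
end

section
/- Let d ≥ 1 and N ≥ 1. Fix d×d real matrices K̃_1, …, K̃_N, a constant g ≥ 0, and for each ordered pair (i, j) with j in the neighborhood 𝒩(i) of i, fix a scalar c_{ij} ∈ ℝ and d×d real matrices R_{ij} and R'_{ij}. Then the MRFTV energy E(K_1, …, K_N) = Σ_i ‖K_i − K̃_i‖_F² + g·Σ_i Σ_{j ∈ 𝒩(i)} ‖K_i − c_{ij}·R_{ij}·K_j·R'_{ij}‖_F² is strictly convex on (ℝ^{d×d})^N and attains a unique global minimizer. -/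
/-!
The energy is `Q₀ (K - K̃) + Q₁ K` for two quadratic forms on `(ℝ^{d×d})^N`: `Q₀`, the sum of
the squared Frobenius norms, is positive definite, and `Q₁`, `g` times a sum of squared Frobenius
norms of linear images of `K`, is positive semidefinite. For a quadratic form and `a + b = 1`,
`Q (a • x + b • y) = a Q x + b Q y - a b Q (x - y)`, so `Q₀` is strictly convex and `Q₁` convex.
In finite dimension a positive definite form is bounded below by `m ‖x‖²` with `m > 0`, so the
continuous energy is coercive and attains its minimum, which strict convexity makes unique.
-/

open Matrix

/-- Squared Frobenius norm of a real matrix: `‖A‖_F² = Σᵢⱼ (A i j)²`. -/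
def frobSq {d : ℕ} (A : Matrix (Fin d) (Fin d) ℝ) : ℝ :=
  ∑ i, ∑ j, (A i j) ^ 2

open Filter Set

namespace QuadraticMap

section Convexity

variable {E : Type*} [AddCommGroup E] [Module ℝ E] (Q : QuadraticMap ℝ E ℝ)

theorem map_add_smul_of_add_eq_one (x y : E) {a b : ℝ} (hab : a + b = 1) :
    Q (a • x + b • y) = a * Q x + b * Q y - a * b * Q (x - y) := by
  have hsub : Q (x - y) = Q x + Q y - polar Q x y := by
    rw [sub_eq_add_neg, QuadraticMap.map_add (⇑Q), QuadraticMap.map_neg, polar_neg_right]; ring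
  obtain rfl : b = 1 - a := by linarith
  rw [hsub, QuadraticMap.map_add (⇑Q), polar_smul_left, polar_smul_right, QuadraticMap.map_smul,
    QuadraticMap.map_smul]
  simp only [smul_eq_mul]
  ring

theorem convexOn_univ (hQ : ∀ x, 0 ≤ Q x) : ConvexOn ℝ univ Q := by
  refine ⟨convex_univ, fun x _ y _ a b ha hb hab => ?_⟩
  rw [map_add_smul_of_add_eq_one Q x y hab, smul_eq_mul, smul_eq_mul]
  nlinarith [mul_nonneg (mul_nonneg ha hb) (hQ (x - y))]

theorem PosDef.strictConvexOn_univ {Q : QuadraticMap ℝ E ℝ} (hQ : Q.PosDef) :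
    StrictConvexOn ℝ univ Q := by
  refine ⟨convex_univ, fun x _ y _ hxy a b ha hb hab => ?_⟩
  rw [map_add_smul_of_add_eq_one Q x y hab, smul_eq_mul, smul_eq_mul]
  nlinarith [mul_pos (mul_pos ha hb) (hQ (x - y) (sub_ne_zero.2 hxy))]

theorem PosDef.strictConvexOn_comp_sub_add {Q₀ Q₁ : QuadraticMap ℝ E ℝ} (h₀ : Q₀.PosDef)
    (h₁ : ∀ x, 0 ≤ Q₁ x) (v : E) :
    StrictConvexOn ℝ univ fun x => Q₀ (x - v) + Q₁ x := by
  have h := h₀.strictConvexOn_univ.translate_right (-v)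
  rw [preimage_univ] at h
  have hf : (fun x => Q₀ (x - v) + Q₁ x) = (Q₀ ∘ fun z => -v + z) + Q₁ := by
    funext x
    simp [sub_eq_neg_add]
  exact hf ▸ h.add_convexOn (convexOn_univ Q₁ h₁)

end Convexity

section FiniteDimensional

variable {E : Type*} [NormedAddCommGroup E] [NormedSpace ℝ E] [FiniteDimensional ℝ E]
  (Q : QuadraticMap ℝ E ℝ)

theorem continuous_of_finiteDimensional : Continuous Q := by
  exact ((associated Q).toContinuousBilinearMap.continuous₂.comp
    (continuous_id.prodMk continuous_id)).congr fun x => associated_eq_self_apply ℝ Q x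

theorem PosDef.exists_pos_mul_norm_sq_le {Q : QuadraticMap ℝ E ℝ} (hQ : Q.PosDef) :
    ∃ m > 0, ∀ x, m * ‖x‖ ^ 2 ≤ Q x := by
  rcases subsingleton_or_nontrivial E with hE | hE
  · exact ⟨1, one_pos, fun x => by simp [Subsingleton.elim x 0]⟩
  obtain ⟨u, hu, hmin⟩ := (isCompact_sphere (0 : E) 1).exists_isMinOn
    (NormedSpace.sphere_nonempty.2 zero_le_one) (continuous_of_finiteDimensional Q).continuousOn
  refine ⟨Q u, hQ u (ne_zero_of_mem_unit_sphere ⟨u, hu⟩), fun x => ?_⟩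
  rcases eq_or_ne x 0 with rfl | hx
  · simp
  have hxn : ‖x‖ ≠ 0 := norm_ne_zero_iff.2 hx
  have hsphere : ‖x‖⁻¹ • x ∈ Metric.sphere (0 : E) 1 := by
    simp [norm_smul, hxn]
  have hmin_x : Q u ≤ Q (‖x‖⁻¹ • x) := hmin hsphere
  rw [QuadraticMap.map_smul, smul_eq_mul] at hmin_x
  calc Q u * ‖x‖ ^ 2 ≤ ‖x‖⁻¹ * ‖x‖⁻¹ * Q x * ‖x‖ ^ 2 := by gcongr
    _ = Q x := by field_simp

theorem PosDef.tendsto_cocompact_atTop {Q : QuadraticMap ℝ E ℝ} (hQ : Q.PosDef) :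
    Tendsto Q (cocompact E) atTop := by
  obtain ⟨m, hm, hle⟩ := hQ.exists_pos_mul_norm_sq_le
  refine tendsto_atTop_mono hle (Tendsto.const_mul_atTop hm ?_)
  exact (tendsto_pow_atTop two_ne_zero).comp tendsto_norm_cocompact_atTop

theorem PosDef.existsUnique_forall_le_comp_sub_add {Q₀ Q₁ : QuadraticMap ℝ E ℝ} (h₀ : Q₀.PosDef)
    (h₁ : ∀ x, 0 ≤ Q₁ x) (v : E) :
    ∃! x, ∀ y, Q₀ (x - v) + Q₁ x ≤ Q₀ (y - v) + Q₁ y := by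
  have hconv := h₀.strictConvexOn_comp_sub_add h₁ v
  have hcont : Continuous fun x => Q₀ (x - v) + Q₁ x :=
    ((continuous_of_finiteDimensional Q₀).comp (continuous_sub_right v)).add
      (continuous_of_finiteDimensional Q₁)
  have hcoer : Tendsto (fun x => Q₀ (x - v) + Q₁ x) (cocompact E) atTop :=
    tendsto_atTop_mono (fun x => le_add_of_nonneg_right (h₁ x))
      (h₀.tendsto_cocompact_atTop.comp (Homeomorph.subRight v).map_cocompact.le)
  obtain ⟨x, hx⟩ := hcont.exists_forall_le hcoer
  exact ⟨x, hx, fun y hy =>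
    hconv.eq_of_isMinOn (fun z _ => hy z) (fun z _ => hx z) trivial trivial⟩

end FiniteDimensional

end QuadraticMap

namespace Matrix

variable {m n : Type*} [Fintype m] [Fintype n]

def frobeniusQuadraticMap (m n : Type*) [Fintype m] [Fintype n] :
    QuadraticMap ℝ (Matrix m n ℝ) ℝ :=
  (QuadraticMap.pi fun _ => QuadraticMap.pi fun _ => QuadraticMap.sq).comp
    (ofLinearEquiv ℝ).symm.toLinearMap

theorem frobeniusQuadraticMap_posDef : (frobeniusQuadraticMap m n).PosDef := by
  have hpi : (QuadraticMap.pi fun (_ : m) => QuadraticMap.pi fun (_ : n) =>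
      (QuadraticMap.sq : QuadraticMap ℝ ℝ ℝ)).PosDef :=
    QuadraticMap.posDef_pi_iff.2 fun _ => QuadraticMap.posDef_pi_iff.2 fun _ _ hx =>
      mul_self_pos.2 hx
  exact fun A hA => hpi ((ofLinearEquiv ℝ).symm A) ((LinearEquiv.map_ne_zero_iff _).2 hA)

theorem frobeniusQuadraticMap_apply {d : ℕ} (A : Matrix (Fin d) (Fin d) ℝ) :
    frobeniusQuadraticMap (Fin d) (Fin d) A = frobSq A := by
  simp [frobeniusQuadraticMap, QuadraticMap.pi_apply, frobSq, pow_two]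

end Matrix

section Vote

variable {m ι : Type*} [Fintype m]

def voteResidual (c : ℝ) (R R' : Matrix m m ℝ) (i j : ι) :
    (ι → Matrix m m ℝ) →ₗ[ℝ] Matrix m m ℝ :=
  LinearMap.proj i - c • (LinearMap.mulRight ℝ R' ∘ₗ LinearMap.mulLeft ℝ R ∘ₗ LinearMap.proj j)

@[simp]
theorem voteResidual_apply (c : ℝ) (R R' : Matrix m m ℝ) (i j : ι) (K : ι → Matrix m m ℝ) :
    voteResidual c R R' i j K = K i - c • (R * K j * R') := by
  simp [voteResidual]

end Vote

-- Any norm would do: it only provides the topology in which the energy is coercive.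
open scoped Matrix.Norms.Frobenius

theorem mrftv_energy_strictly_convex_unique_min_general (d N : ℕ)
    (Kt : Fin N → Matrix (Fin d) (Fin d) ℝ)
    (g : ℝ) (hg : 0 ≤ g)
    (𝒩 : Fin N → Finset (Fin N))
    (c : Fin N → Fin N → ℝ)
    (R R' : Fin N → Fin N → Matrix (Fin d) (Fin d) ℝ)
    (E : (Fin N → Matrix (Fin d) (Fin d) ℝ) → ℝ)
    (hE : E = fun K =>
      (∑ i, frobSq (K i - Kt i)) +
        g * ∑ i, ∑ j ∈ 𝒩 i, frobSq (K i - c i j • (R i j * K j * R' i j))) :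
    StrictConvexOn ℝ Set.univ E ∧
      ∃! Kstar : Fin N → Matrix (Fin d) (Fin d) ℝ, ∀ K, E Kstar ≤ E K := by
  set F := frobeniusQuadraticMap (Fin d) (Fin d)
  set Q₀ : QuadraticMap ℝ (Fin N → Matrix (Fin d) (Fin d) ℝ) ℝ := QuadraticMap.pi fun _ => F
  set Q₁ := g • ∑ i, ∑ j ∈ 𝒩 i, F.comp (voteResidual (c i j) (R i j) (R' i j) i j)
  have h₀ : Q₀.PosDef := QuadraticMap.posDef_pi_iff.2 fun _ => frobeniusQuadraticMap_posDef
  have h₁ : ∀ K, 0 ≤ Q₁ K := fun K => by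
    simp only [Q₁, _root_.smul_apply, _root_.sum_apply, QuadraticMap.comp_apply]
    exact smul_nonneg hg (Finset.sum_nonneg fun i _ => Finset.sum_nonneg fun j _ =>
      frobeniusQuadraticMap_posDef.nonneg _)
  have hQ : E = fun K => Q₀ (K - Kt) + Q₁ K := by
    subst hE
    funext K
    simp [Q₀, Q₁, F, QuadraticMap.pi_apply, frobeniusQuadraticMap_apply]
  subst hQ
  exact ⟨h₀.strictConvexOn_comp_sub_add h₁ Kt, h₀.existsUnique_forall_le_comp_sub_add h₁ Kt⟩

/-- The MRFTV energy
`E(K) = Σᵢ ‖Kᵢ − K̃ᵢ‖_F² + g Σᵢ Σ_{j ∈ 𝒩(i)} ‖Kᵢ − c_{ij} R_{ij} K_j R'_{ij}‖_F²`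
is strictly convex on `(ℝ^{d×d})^N` and attains a unique global minimizer. -/
theorem mrftv_energy_strictly_convex_unique_min (d N : ℕ) (hd : 1 ≤ d) (hN : 1 ≤ N)
    (Kt : Fin N → Matrix (Fin d) (Fin d) ℝ)
    (g : ℝ) (hg : 0 ≤ g)
    (𝒩 : Fin N → Finset (Fin N))
    (c : Fin N → Fin N → ℝ)
    (R R' : Fin N → Fin N → Matrix (Fin d) (Fin d) ℝ)
    (E : (Fin N → Matrix (Fin d) (Fin d) ℝ) → ℝ)
    (hE : E = fun K =>
      (∑ i, frobSq (K i - Kt i)) +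
        g * ∑ i, ∑ j ∈ 𝒩 i, frobSq (K i - c i j • (R i j * K j * R' i j))) :
    StrictConvexOn ℝ Set.univ E ∧
      ∃! Kstar : Fin N → Matrix (Fin d) (Fin d) ℝ, ∀ K, E Kstar ≤ E K :=
  mrftv_energy_strictly_convex_unique_min_general d N Kt g hg 𝒩 c R R' E hE
end
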